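/- arXiv:2011.10436 — 3 statements merged into one kernel-verified Lean document; each statement's English description precedes it below -/
import Mathlib

section
/- For every n ≥ 3 there exists a coloring c of χ(σ) with values in {0,…,n−1} such that: (1) for every face ρ′ of σ with dim(ρ′) ≤ n−3, c(χ(ρ′)) = ρ′; (2) for every (n−2)-dimensional face ρ′ of σ, c(χ(ρ′)) = {0,…,n−1}; (3) c(χ(σ)) = {0,…,n−1} and no (n−1)-simplex of χ(σ) receives n distinct values under c. -/
open scoped Classical

/-- Vertices of the ℓ-th chromatic subdivision of the standard simplex on `Fin n`. -/
def ChromV (n : ℕ) : ℕ → Type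
  | 0 => Fin n
  | ℓ + 1 => Fin n × Finset (ChromV n ℓ)

instance chromVDecEq (n : ℕ) : ∀ ℓ, DecidableEq (ChromV n ℓ)
  | 0 => inferInstanceAs (DecidableEq (Fin n))
  | ℓ + 1 =>
    letI := chromVDecEq n ℓ
    inferInstanceAs (DecidableEq (Fin n × Finset (ChromV n ℓ)))

/-- The color of a vertex of the ℓ-th chromatic subdivision. -/
def chromCol (n : ℕ) : ∀ ℓ, ChromV n ℓ → Fin n
  | 0, v => v
  | _ + 1, v => v.1

/-- `ids γ`: the set of colors of the vertices of a simplex `γ`. -/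
def ids {n ℓ : ℕ} (γ : Finset (ChromV n ℓ)) : Finset (Fin n) :=
  γ.image (chromCol n ℓ)

/-- One step of standard chromatic subdivision of a set of (nonempty) simplexes. -/
def subdiv {α : Type} {n : ℕ} (col : α → Fin n) (K : Set (Finset α)) :
    Set (Finset (Fin n × Finset α)) :=
  { s | s.Nonempty ∧
    (∀ v ∈ s, v.2 ∈ K ∧ v.1 ∈ v.2.image col) ∧
    (∀ u ∈ s, ∀ v ∈ s, u ≠ v → u.1 ≠ v.1) ∧
    (∀ u ∈ s, ∀ v ∈ s, u.2 ⊆ v.2 ∨ v.2 ⊆ u.2) ∧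
    (∀ u ∈ s, ∀ v ∈ s, u.1 ∈ v.2.image col → u.2 ⊆ v.2) }

/-- The faces of a simplex `τ`: its nonempty subsets. -/
def facesOf {α : Type} (τ : Finset α) : Set (Finset α) :=
  { s | s.Nonempty ∧ s ⊆ τ }

/-- The ℓ-th chromatic subdivision `χ^ℓ(ρ)` of a face `ρ` of σ,
as a subcomplex of `χ^ℓ(σ)`. -/
def chromSub (n : ℕ) (ρ : Finset (Fin n)) : ∀ ℓ, Set (Finset (ChromV n ℓ))
  | 0 => facesOf ρ
  | ℓ + 1 => subdiv (chromCol n ℓ) (chromSub n ρ ℓ)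

/-- Iterated chromatic subdivision of a subcomplex sitting at level ℓ. -/
def iterSub (n ℓ : ℕ) : ∀ m, Set (Finset (ChromV n ℓ)) → Set (Finset (ChromV n (ℓ + m)))
  | 0, K => K
  | m + 1, K => subdiv (chromCol n (ℓ + m)) (iterSub n ℓ m K)

/-- `χ^m(τ)` for a simplex `τ ∈ χ^ℓ(σ)`: the subcomplex of `χ^{ℓ+m}(σ)` obtained by
iterated subdivision of `τ` and its faces. -/
def subOf {n ℓ : ℕ} (m : ℕ) (τ : Finset (ChromV n ℓ)) : Set (Finset (ChromV n (ℓ + m))) :=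
  iterSub n ℓ m (facesOf τ)

/-- The vertices of a subcomplex. -/
def vertexSet {n ℓ : ℕ} (L : Set (Finset (ChromV n ℓ))) : Set (ChromV n ℓ) :=
  { v | ∃ s ∈ L, v ∈ s }

/-- `c(L)`: the set of values taken by a coloring `c` on the vertices of a subcomplex `L`. -/
def colorSet {n ℓ : ℕ} {β : Type} (c : ChromV n ℓ → β) (L : Set (Finset (ChromV n ℓ))) :
    Set β :=
  c '' vertexSet L

/-- The carrier of a simplex `γ ∈ χ^ℓ(σ)`: the smallest face `ρ` of σ with `γ ∈ χ^ℓ(ρ)`,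
realized as the intersection of all such faces. -/
noncomputable def carr {n ℓ : ℕ} (γ : Finset (ChromV n ℓ)) : Finset (Fin n) :=
  Finset.univ.filter fun i => ∀ ρ : Finset (Fin n), γ ∈ chromSub n ρ ℓ → i ∈ ρ

/-- The set agreement valency map: `val(τ) = ids(τ)` if `|τ| ≤ n-2`, else `carr(τ)`. -/
noncomputable def saVal {n ℓ : ℕ} (τ : Finset (ChromV n ℓ)) : Finset (Fin n) :=
  if τ.card ≤ n - 2 then ids τ else carr τ

/-- The weak symmetry breaking valency map: `{1}` on simplexes of dimension ≤ n-3,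
`{0,1}` otherwise. -/
def wsbVal {n ℓ : ℕ} (τ : Finset (ChromV n ℓ)) : Set (Fin 2) :=
  if τ.card ≤ n - 2 then {1} else Set.univ

/-- The simplicial map on the ℓ-th chromatic subdivision induced functorially by a
map `f` on the colors/vertices of σ. -/
def vmap (n : ℕ) (f : Fin n → Fin n) : ∀ ℓ, ChromV n ℓ → ChromV n ℓ
  | 0, v => f v
  | ℓ + 1, v => (f v.1, v.2.image (vmap n f ℓ))

/-- The order-preserving bijection between two faces `s` and `t` of σ of the same
cardinality (extended by the identity elsewhere). -/
noncomputable def opBij {n : ℕ} (s t : Finset (Fin n)) (i : Fin n) : Fin n :=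
  if h : i ∈ s ∧ s.card = t.card then
    ↑(t.orderIsoOfFin rfl (Fin.cast h.2 ((s.orderIsoOfFin rfl).symm ⟨i, h.1⟩)))
  else i

/-- A coloring of `χ^L(σ)` is symmetric if it is invariant under the order-preserving
simplicial bijections between subdivided faces of σ of the same dimension. -/
def SymmColoring {n L : ℕ} {β : Type} (b : ChromV n L → β) : Prop :=
  ∀ s t : Finset (Fin n), s.Nonempty → t.Nonempty → s ≠ t → s.card = t.card →
    ∀ v ∈ vertexSet (chromSub n s L), b (vmap n (opBij s t) L v) = b v

/-- Transport of vertices along an equality of levels. -/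
def castV (n : ℕ) {a b : ℕ} (h : a = b) : ChromV n a → ChromV n b :=
  fun v => h ▸ v

/-!
Colour a vertex `(i, τ)` of `χ(σ)` by `i` when `|τ| ≤ n - 2` or `i = z`, and otherwise by the
colour missing from `τ` (by `z` if `τ = σ`). Small faces keep their colours, and an `(n-2)`-face `ρ`
picks up its missing colour at the vertices `(i, ρ)` with `i ≠ z`. In an `(n-1)`-simplex of `χ(σ)`
the carriers form a chain and the top one contains every colour, so it is `σ` and its vertex is
coloured `z`. If the colouring were injective this would be the vertex of colour `z`; the top carrier
among the remaining vertices then contains `σ \ {z}`, so that vertex is coloured `z` as well.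
-/

lemma exists_mem_image_fst_subset_snd {β : Type*} [DecidableEq β] (t : Finset (β × Finset β))
    (ht : t.Nonempty) (hmem : ∀ v ∈ t, v.1 ∈ v.2)
    (hchain : ∀ u ∈ t, ∀ v ∈ t, u.2 ⊆ v.2 ∨ v.2 ⊆ u.2) :
    ∃ m ∈ t, t.image Prod.fst ⊆ m.2 := by
  obtain ⟨m, hm, hmax⟩ := t.exists_max_image (fun v => v.2.card) ht
  refine ⟨m, hm, Finset.image_subset_iff.2 fun u hu => ?_⟩
  rcases hchain u hu m hm with h | h
  · exact h (hmem u hu)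
  · exact Finset.eq_of_subset_of_card_le h (hmax u hu) ▸ hmem u hu

lemma mem_chromSub_one {n : ℕ} {ρ : Finset (Fin n)} {s : Finset (Fin n × Finset (Fin n))} :
    s ∈ chromSub n ρ 1 ↔ s.Nonempty ∧ (∀ v ∈ s, (v.2.Nonempty ∧ v.2 ⊆ ρ) ∧ v.1 ∈ v.2) ∧
      (∀ u ∈ s, ∀ v ∈ s, u ≠ v → u.1 ≠ v.1) ∧ (∀ u ∈ s, ∀ v ∈ s, u.2 ⊆ v.2 ∨ v.2 ⊆ u.2) ∧
      (∀ u ∈ s, ∀ v ∈ s, u.1 ∈ v.2 → u.2 ⊆ v.2) := by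
  have hcol : ∀ t : Finset (ChromV n 0), t.image (chromCol n 0) = t := fun t => Finset.image_id
  simp only [chromSub, subdiv, facesOf, hcol]
  rfl

lemma mem_vertexSet_chromSub_one {n : ℕ} {ρ : Finset (Fin n)} {v : Fin n × Finset (Fin n)} :
    v ∈ vertexSet (chromSub n ρ 1) ↔ v.2.Nonempty ∧ v.2 ⊆ ρ ∧ v.1 ∈ v.2 := by
  constructor
  · rintro ⟨s, hs, hv⟩
    obtain ⟨-, hvert, -⟩ := mem_chromSub_one.1 hs
    obtain ⟨⟨hne, hsub⟩, hcol⟩ := hvert v hv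
    exact ⟨hne, hsub, hcol⟩
  · rintro ⟨hne, hsub, hcol⟩
    have hs : ({v} : Finset (Fin n × Finset (Fin n))) ∈ chromSub n ρ 1 :=
      mem_chromSub_one.2 (by simp [hne, hsub, hcol])
    exact ⟨_, hs, Finset.mem_singleton_self v⟩

lemma singleton_mem_vertexSet_chromSub_one {n : ℕ} {ρ : Finset (Fin n)} {b : Fin n} (hb : b ∈ ρ) :
    ((b, {b}) : Fin n × Finset (Fin n)) ∈ vertexSet (chromSub n ρ 1) :=
  mem_vertexSet_chromSub_one.2
    ⟨Finset.singleton_nonempty b, Finset.singleton_subset_iff.2 hb, Finset.mem_singleton_self b⟩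

noncomputable def saColoring (n : ℕ) (z : Fin n) (v : Fin n × Finset (Fin n)) : Fin n :=
  if v.2.card ≤ n - 2 ∨ v.1 = z then v.1
  else if h : v.2ᶜ.Nonempty then v.2ᶜ.min' h else z

section saColoring

variable {n : ℕ} {z : Fin n} {v : Fin n × Finset (Fin n)}

lemma saColoring_eq_fst (h : v.2.card ≤ n - 2 ∨ v.1 = z) : saColoring n z v = v.1 :=
  if_pos h

lemma saColoring_eq_of_compl_subset (hn : 2 ≤ n) (h : v.2ᶜ ⊆ {z}) : saColoring n z v = z := by
  have hcard : n - 1 ≤ v.2.card := by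
    have := Finset.card_le_card h
    rw [Finset.card_compl, Fintype.card_fin, Finset.card_singleton] at this
    omega
  unfold saColoring
  split_ifs with hsmall hne
  · exact hsmall.resolve_left (by omega)
  · exact Finset.mem_singleton.1 (h (Finset.min'_mem _ hne))
  · rfl

lemma saColoring_eq_of_not_mem (hn : 2 ≤ n) (hcard : v.2.card = n - 1) (hz : v.1 ≠ z)
    {b : Fin n} (hb : b ∉ v.2) : saColoring n z v = b := by
  have hcompl : v.2ᶜ = {b} := by
    refine (Finset.eq_of_subset_of_card_le (Finset.singleton_subset_iff.2 (Finset.mem_compl.2 hb))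
      ?_).symm
    rw [Finset.card_compl, Fintype.card_fin, hcard, Finset.card_singleton]
    omega
  unfold saColoring
  rw [if_neg (by omega), dif_pos (hcompl ▸ Finset.singleton_nonempty b)]
  simp only [hcompl, Finset.min'_singleton]

lemma subset_colorSet_saColoring (hn : 3 ≤ n) (ρ : Finset (Fin n)) :
    (ρ : Set (Fin n)) ⊆ colorSet (saColoring n z) (chromSub n ρ 1) := fun b hb => by
  have hsingle : ({b} : Finset (Fin n)).card ≤ n - 2 := by
    rw [Finset.card_singleton]
    omega
  exact ⟨_, singleton_mem_vertexSet_chromSub_one hb, saColoring_eq_fst (Or.inl hsingle)⟩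

lemma colorSet_saColoring_of_card_le {ρ : Finset (Fin n)} (hρ : ρ.card ≤ n - 2) :
    colorSet (saColoring n z) (chromSub n ρ 1) = ρ := by
  refine subset_antisymm ?_ fun b hb => ?_
  · rintro _ ⟨v, hv, rfl⟩
    obtain ⟨-, hsub, hcol⟩ := mem_vertexSet_chromSub_one.1 hv
    rw [saColoring_eq_fst (Or.inl ((Finset.card_le_card hsub).trans hρ))]
    exact hsub hcol
  · have hsingle : ({b} : Finset (Fin n)).card ≤ n - 2 :=
      (Finset.card_le_card (Finset.singleton_subset_iff.2 hb)).trans hρ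
    exact ⟨_, singleton_mem_vertexSet_chromSub_one hb, saColoring_eq_fst (Or.inl hsingle)⟩

lemma colorSet_saColoring_of_card_eq (hn : 3 ≤ n) {ρ : Finset (Fin n)} (hρ : ρ.card = n - 1) :
    colorSet (saColoring n z) (chromSub n ρ 1) = Set.univ := by
  refine Set.eq_univ_of_forall fun b => ?_
  by_cases hb : b ∈ ρ
  · exact subset_colorSet_saColoring hn ρ hb
  obtain ⟨a, ha⟩ : (ρ.erase z).Nonempty := by
    have := Finset.pred_card_le_card_erase (s := ρ) (a := z)
    exact Finset.card_pos.1 (by omega)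
  obtain ⟨haz, haρ⟩ := Finset.mem_erase.1 ha
  exact ⟨(a, ρ), mem_vertexSet_chromSub_one.2 ⟨⟨a, haρ⟩, subset_rfl, haρ⟩,
    saColoring_eq_of_not_mem (by omega) hρ haz hb⟩

theorem card_image_saColoring_lt (hn : 2 ≤ n) {s : Finset (Fin n × Finset (Fin n))}
    (hs : s ∈ chromSub n Finset.univ 1) (hcard : s.card = n) :
    (s.image (saColoring n z)).card < n := by
  obtain ⟨hne, hvert, hcol, hchain, -⟩ := mem_chromSub_one.1 hs
  have hmem : ∀ v ∈ s, v.1 ∈ v.2 := fun v hv => (hvert v hv).2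
  refine lt_of_le_of_ne (Finset.card_image_le.trans_eq hcard) fun himg => ?_
  have hinj : Set.InjOn (saColoring n z) s := Finset.card_image_iff.1 (himg.trans hcard.symm)
  have hfst : s.image Prod.fst = Finset.univ := by
    refine Finset.eq_univ_of_card _ ?_
    rw [Finset.card_image_of_injOn fun u hu v hv => not_imp_not.1 (hcol u hu v hv), hcard,
      Fintype.card_fin]
  obtain ⟨m, hm, hmtop⟩ := exists_mem_image_fst_subset_snd s hne hmem hchain
  have hcm : saColoring n z m = z := saColoring_eq_of_compl_subset hn (by
    rw [hfst, Finset.univ_subset_iff] at hmtop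
    simp [hmtop])
  obtain ⟨w, hw, hwz⟩ := Finset.mem_image.1 (hfst ▸ Finset.mem_univ z)
  obtain rfl : w = m := hinj hw hm ((saColoring_eq_fst (Or.inr hwz)).trans (hwz.trans hcm.symm))
  have herase : (s.erase w).Nonempty := by
    rw [← Finset.card_pos, Finset.card_erase_of_mem hw]
    omega
  obtain ⟨M, hM, hMtop⟩ := exists_mem_image_fst_subset_snd (s.erase w) herase
    (fun v hv => hmem v (Finset.mem_of_mem_erase hv))
    (fun u hu v hv => hchain u (Finset.mem_of_mem_erase hu) v (Finset.mem_of_mem_erase hv))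
  have hMz : M.2ᶜ ⊆ {z} := fun i hi => by
    by_contra hiz
    obtain ⟨u, hu, rfl⟩ := Finset.mem_image.1 (hfst ▸ Finset.mem_univ i)
    have hu' : u ∈ s.erase w := Finset.mem_erase.2 ⟨fun h => hiz (by simp [h, hwz]), hu⟩
    exact Finset.mem_compl.1 hi (hMtop (Finset.mem_image_of_mem _ hu'))
  exact Finset.ne_of_mem_erase hM
    (hinj (Finset.mem_of_mem_erase hM) hw ((saColoring_eq_of_compl_subset hn hMz).trans hcm.symm))

end saColoring

/-- Lemma on colorings of the first chromatic subdivision, case (2.a). -/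
theorem exists_coloring_chromSub_one_sa
    (n : ℕ) (hn : 3 ≤ n) :
    ∃ c : ChromV n 1 → Fin n,
      (∀ ρ' : Finset (Fin n), ρ'.Nonempty → ρ'.card ≤ n - 2 →
        colorSet c (chromSub n ρ' 1) = ↑ρ') ∧
      (∀ ρ' : Finset (Fin n), ρ'.card = n - 1 →
        colorSet c (chromSub n ρ' 1) = Set.univ) ∧
      colorSet c (chromSub n Finset.univ 1) = Set.univ ∧
      (∀ s ∈ chromSub n Finset.univ 1, s.card = n → (s.image c).card < n) := by
  let z : Fin n := ⟨0, by omega⟩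
  refine ⟨saColoring n z, fun ρ _ hρ => colorSet_saColoring_of_card_le hρ,
    fun ρ hρ => colorSet_saColoring_of_card_eq hn hρ, ?_,
    fun s hs hcard => card_image_saColoring_lt (by omega) hs hcard⟩
  exact Set.eq_univ_of_univ_subset (by simpa using subset_colorSet_saColoring (z := z) hn Finset.univ)
end

section
/- Let n ≥ 3 and for i ∈ {0,…,n−1} let ρ_i denote the (n−2)-dimensional face {0,…,n−1}∖{i} of σ. For every i, j ∈ {0,…,n−1} there exists a coloring c of χ(ρ_i) with values in {0,…,n−1} such that: (1) for every proper face ρ′ of ρ_i and every vertex v of χ(ρ′), c(v) equals the color of v; (2) some vertex of χ(ρ_i) has c-value i; (3) no (n−2)-simplex γ of χ(ρ_i) satisfies c(γ) = ρ_j. -/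
/-!
Recolor by `i` every interior vertex of `χ(ρ_i)` (one whose view is all of `ρ_i`) whose color
is not `j`. Vertices over proper faces keep their colors, and since `|ρ_i| ≥ 2` some interior
vertex has a color other than `j` and takes the value `i`. A facet of `χ(ρ_i)` carries every
color of `ρ_i`, and its vertex with the largest view is interior. If `j ≠ i`, the facet's vertex
of color `j` keeps the value `j`; if `j = i`, its largest-view vertex has a color other than `i`
and takes the value `i = j`. Either way `j` is a value on the facet, so the values are not `ρ_j`.
-/

open scoped Classical

section Subdiv

variable {α : Type} {n : ℕ} {col : α → Fin n} {K : Set (Finset α)}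

theorem singleton_mem_subdiv {τ : Finset α} (hτ : τ ∈ K) {k : Fin n}
    (hk : k ∈ τ.image col) : {(k, τ)} ∈ subdiv col K := by
  refine ⟨Finset.singleton_nonempty _, ?_, ?_, ?_, ?_⟩ <;>
    simp only [Finset.mem_singleton] <;> rintro _ rfl
  · exact ⟨hτ, hk⟩
  all_goals rintro _ rfl
  · exact fun h => (h rfl).elim
  · exact Or.inl subset_rfl
  · exact fun _ => subset_rfl

theorem injOn_fst_of_mem_subdiv {s : Finset (Fin n × Finset α)} (hs : s ∈ subdiv col K) :
    Set.InjOn Prod.fst (s : Set (Fin n × Finset α)) := fun u hu v hv huv => by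
  by_contra h
  exact hs.2.2.1 u hu v hv h huv

theorem exists_forall_snd_subset_of_mem_subdiv {s : Finset (Fin n × Finset α)}
    (hs : s ∈ subdiv col K) : ∃ u ∈ s, ∀ v ∈ s, v.2 ⊆ u.2 := by
  obtain ⟨u, hu, hmax⟩ := s.exists_maximalFor Prod.snd hs.1
  refine ⟨u, hu, fun v hv => ?_⟩
  rcases hs.2.2.2.1 v hv u hu with h | h
  · exact h
  · exact hmax hv h

end Subdiv

section LevelOne

variable {n : ℕ} {ρ : Finset (Fin n)} {γ : Finset (Fin n × Finset (Fin n))}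

theorem snd_subset_of_mem_chromSub_one (hγ : γ ∈ chromSub n ρ 1)
    {v} (hv : v ∈ γ) : v.2 ⊆ ρ :=
  (hγ.2.1 v hv).1.2

theorem fst_mem_snd_of_mem_chromSub_one (hγ : γ ∈ chromSub n ρ 1)
    {v} (hv : v ∈ γ) : v.1 ∈ v.2 := by
  obtain ⟨k, hk, hkv⟩ := Finset.mem_image.1 (hγ.2.1 v hv).2
  exact hkv ▸ hk

theorem mk_mem_vertexSet_chromSub_one {k : Fin n} (hk : k ∈ ρ) :
    ((k, ρ) : Fin n × Finset (Fin n)) ∈ vertexSet (chromSub n ρ 1) := by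
  show ∃ γ ∈ chromSub n ρ 1, _ ∈ γ
  have hρ : ρ ∈ chromSub n ρ 0 := ⟨⟨k, hk⟩, subset_rfl⟩
  exact ⟨_, singleton_mem_subdiv hρ (Finset.mem_image_of_mem _ hk),
    Finset.mem_singleton_self _⟩

theorem image_fst_eq_of_mem_chromSub_one (hγ : γ ∈ chromSub n ρ 1)
    (hcard : γ.card = ρ.card) : γ.image Prod.fst = ρ := by
  have hinj : Set.InjOn Prod.fst (γ : Set (Fin n × Finset (Fin n))) :=
    injOn_fst_of_mem_subdiv hγ
  refine Finset.eq_of_subset_of_card_le ?_ (by rw [Finset.card_image_of_injOn hinj, hcard])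
  intro k hk
  obtain ⟨v, hv, rfl⟩ := Finset.mem_image.1 hk
  exact snd_subset_of_mem_chromSub_one hγ hv (fst_mem_snd_of_mem_chromSub_one hγ hv)

theorem exists_snd_eq_of_mem_chromSub_one (hγ : γ ∈ chromSub n ρ 1)
    (hcard : γ.card = ρ.card) : ∃ u ∈ γ, u.2 = ρ := by
  obtain ⟨u, hu, hmax⟩ := exists_forall_snd_subset_of_mem_subdiv hγ
  refine ⟨u, hu, (snd_subset_of_mem_chromSub_one hγ hu).antisymm fun k hk => ?_⟩
  rw [← image_fst_eq_of_mem_chromSub_one hγ hcard] at hk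
  obtain ⟨v, hv, rfl⟩ := Finset.mem_image.1 hk
  exact hmax v hv (fst_mem_snd_of_mem_chromSub_one hγ hv)

def recolorInterior (ρ : Finset (Fin n)) (i j : Fin n) (v : Fin n × Finset (Fin n)) : Fin n :=
  if v.2 = ρ ∧ v.1 ≠ j then i else v.1

theorem recolorInterior_of_mem_vertexSet_of_ssubset {ρ' : Finset (Fin n)} (h : ρ' ⊂ ρ)
    (i j : Fin n) {v : Fin n × Finset (Fin n)} (hv : v ∈ vertexSet (chromSub n ρ' 1)) :
    recolorInterior ρ i j v = v.1 := by
  obtain ⟨γ, hγ, hvγ⟩ := hv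
  have hne : v.2 ≠ ρ := fun heq => h.not_subset (heq ▸ snd_subset_of_mem_chromSub_one hγ hvγ)
  simp [recolorInterior, hne]

theorem recolorInterior_mk_self (i : Fin n) {j k : Fin n} (hk : k ≠ j) :
    recolorInterior ρ i j (k, ρ) = i := by
  simp [recolorInterior, hk]

theorem mem_image_recolorInterior_of_mem (i : Fin n) {j : Fin n} (hγ : γ ∈ chromSub n ρ 1)
    (hcard : γ.card = ρ.card) (hj : j ∈ ρ) : j ∈ γ.image (recolorInterior ρ i j) := by
  rw [← image_fst_eq_of_mem_chromSub_one hγ hcard] at hj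
  obtain ⟨w, hw, rfl⟩ := Finset.mem_image.1 hj
  exact Finset.mem_image.2 ⟨w, hw, by simp [recolorInterior]⟩

theorem mem_image_recolorInterior_of_notMem (i : Fin n) {j : Fin n} (hγ : γ ∈ chromSub n ρ 1)
    (hcard : γ.card = ρ.card) (hj : j ∉ ρ) : i ∈ γ.image (recolorInterior ρ i j) := by
  obtain ⟨u, hu, huρ⟩ := exists_snd_eq_of_mem_chromSub_one hγ hcard
  have hu₁ : u.1 ≠ j := fun h => hj (h ▸ huρ ▸ fst_mem_snd_of_mem_chromSub_one hγ hu)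
  exact Finset.mem_image.2 ⟨u, hu, by simp [recolorInterior, huρ, hu₁]⟩

theorem mem_image_recolorInterior_erase {i j : Fin n}
    (hγ : γ ∈ chromSub n (Finset.univ.erase i) 1)
    (hcard : γ.card = (Finset.univ.erase i).card) :
    j ∈ γ.image (recolorInterior (Finset.univ.erase i) i j) := by
  rcases eq_or_ne j i with rfl | hji
  · exact mem_image_recolorInterior_of_notMem j hγ hcard (Finset.notMem_erase j _)
  · exact mem_image_recolorInterior_of_mem i hγ hcard
      (Finset.mem_erase.2 ⟨hji, Finset.mem_univ j⟩)

end LevelOne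

/-- claim on colorings of `χ(ρ_i)`, where `ρ_i = {0,…,n-1} \ {i}`. -/
theorem exists_coloring_boundary_face
    (n : ℕ) (hn : 3 ≤ n) (i j : Fin n) :
    ∃ c : ChromV n 1 → Fin n,
      (∀ ρ' : Finset (Fin n), ρ'.Nonempty → ρ' ⊂ Finset.univ.erase i →
        ∀ v ∈ vertexSet (chromSub n ρ' 1), c v = chromCol n 1 v) ∧
      (∃ v ∈ vertexSet (chromSub n (Finset.univ.erase i) 1), c v = i) ∧
      (∀ γ ∈ chromSub n (Finset.univ.erase i) 1, γ.card = n - 1 →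
        γ.image c ≠ Finset.univ.erase j) := by
  have hcard : (Finset.univ.erase i).card = n - 1 := by simp [Finset.card_erase_of_mem]
  obtain ⟨k, hk, hkj⟩ := (Finset.univ.erase i).exists_mem_ne (by omega) j
  refine ⟨recolorInterior (Finset.univ.erase i) i j,
    fun ρ' _ hρ' v hv => recolorInterior_of_mem_vertexSet_of_ssubset hρ' i j hv,
    ⟨_, mk_mem_vertexSet_chromSub_one hk, recolorInterior_mk_self i hkj⟩,
    fun γ hγ hγcard himage => ?_⟩
  have hj := mem_image_recolorInterior_erase (j := j) hγ (hγcard.trans hcard.symm)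
  exact Finset.notMem_erase j _ ((Finset.ext_iff.1 himage j).1 hj)
end

section
/- For every n ≥ 3 and every ℓ ≥ 1, the weak symmetry breaking valency task on χ^ℓ(σ) is locally solvable in one round: for every simplex τ ∈ χ^ℓ(σ) there exists a symmetric coloring b_τ of χ^{ℓ+1}(σ) with values in {0,1} that is consistent and complete with the weak symmetry breaking valency map val on χ^ℓ(σ), and such that no (n−1)-simplex of χ(τ) is b_τ-monochromatic (i.e., no (n−1)-simplex of χ(τ) has all its vertices assigned the same value by b_τ). -/
open scoped Classical

/-! Color a vertex `(c, β)` of `χ^{ℓ+1}(σ)` by `0` exactly when `β` has at least `n - 1` colors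
and `c` is not the least of them. This rule sees only the relative order of colors, so it is
symmetric, and it realizes the valency map: a singleton carrier gives `1`, the largest color of a
carrier with `n - 1` or `n` colors gives `0`. In `χ(τ)` for a facet `τ` it can still leave facets
colored `1` throughout; they are repaired by recoloring the vertices carried by `τ` (`1` for one
color `i₀`, `0` otherwise) and those carried by the ridge of `τ` missing `i₀` (all `0`). Since
`ℓ ≥ 1`, both simplexes contain a vertex whose own carrier has all `n` colors, so they lie off the
boundary of `σ` and the symmetry is not disturbed. In a facet of `χ(τ)`, a `0` comes from a vertex
carried by `τ` of color other than `i₀` or, failing that, from the vertex with the largest carrier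
below `τ`, which is then the ridge; a `1` comes from the vertex of color `i₀` if `τ` carries it,
and otherwise from the vertex of least color among those not carried by `τ`. -/

open Finset

lemma exists_mem_forall_subset_of_chain {ι α : Type*} {s : Finset ι} (f : ι → Finset α)
    (hs : s.Nonempty) (hchain : ∀ u ∈ s, ∀ v ∈ s, f u ⊆ f v ∨ f v ⊆ f u) :
    ∃ w ∈ s, ∀ v ∈ s, f v ⊆ f w := by
  obtain ⟨w, hw, hmax⟩ := s.exists_max_image (fun v => (f v).card) hs
  refine ⟨w, hw, fun v hv => (hchain v hv w hw).elim id fun h => ?_⟩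
  rw [eq_of_subset_of_card_le h (hmax v hv)]

section Colors

variable {n : ℕ}

lemma ids_mono {ℓ : ℕ} {γ δ : Finset (ChromV n ℓ)} (h : γ ⊆ δ) : ids γ ⊆ ids δ :=
  image_subset_image h

lemma nonempty_of_mem_chromSub {ρ : Finset (Fin n)} :
    ∀ {ℓ : ℕ} {γ : Finset (ChromV n ℓ)}, γ ∈ chromSub n ρ ℓ → γ.Nonempty
  | 0, _, h => h.1
  | _ + 1, _, h => h.1

lemma ids_subset_of_mem_chromSub {ρ : Finset (Fin n)} :
    ∀ {ℓ : ℕ} {γ : Finset (ChromV n ℓ)}, γ ∈ chromSub n ρ ℓ → ids γ ⊆ ρ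
  | 0, _, h => fun _ hi => by
      obtain ⟨v, hv, rfl⟩ := mem_image.mp hi
      exact h.2 hv
  | _ + 1, _, h => fun _ hi => by
      obtain ⟨v, hv, rfl⟩ := mem_image.mp hi
      exact ids_subset_of_mem_chromSub (h.2.1 v hv).1 (h.2.1 v hv).2

lemma injOn_chromCol_of_mem_chromSub {ρ : Finset (Fin n)} :
    ∀ {ℓ : ℕ} {γ : Finset (ChromV n ℓ)}, γ ∈ chromSub n ρ ℓ → Set.InjOn (chromCol n ℓ) γ
  | 0, _, _ => fun _ _ _ _ h => h
  | _ + 1, _, h => fun u hu v hv huv => by_contra fun hne => h.2.2.1 u hu v hv hne huv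

lemma card_ids_of_subset_of_mem_chromSub {ρ : Finset (Fin n)} {ℓ : ℕ}
    {γ β : Finset (ChromV n ℓ)} (hγ : γ ∈ chromSub n ρ ℓ) (hβ : β ⊆ γ) :
    (ids β).card = β.card :=
  card_image_of_injOn ((injOn_chromCol_of_mem_chromSub hγ).mono (coe_subset.mpr hβ))

lemma card_eq_of_ids_eq_univ {ρ : Finset (Fin n)} {ℓ : ℕ} {γ : Finset (ChromV n ℓ)}
    (hγ : γ ∈ chromSub n ρ ℓ) (h : ids γ = univ) : γ.card = n := by
  rw [← card_ids_of_subset_of_mem_chromSub hγ subset_rfl, h, card_univ, Fintype.card_fin]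

lemma chromCol_vmap (f : Fin n → Fin n) :
    ∀ (ℓ : ℕ) (v : ChromV n ℓ), chromCol n ℓ (vmap n f ℓ v) = f (chromCol n ℓ v)
  | 0, _ => rfl
  | _ + 1, _ => rfl

lemma ids_image_vmap {ℓ : ℕ} (f : Fin n → Fin n) (γ : Finset (ChromV n ℓ)) :
    ids (γ.image (vmap n f ℓ)) = (ids γ).image f := by
  simp only [ids, image_image]
  exact image_congr fun v _ => chromCol_vmap f ℓ v

end Colors

section Subdivision

variable {n ℓ : ℕ}

lemma exists_mem_fst_eq_of_card_eq {α : Type} {col : α → Fin n} {K : Set (Finset α)}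
    {s : Finset (Fin n × Finset α)} (hs : s ∈ subdiv col K) (hcard : s.card = n) (c : Fin n) :
    ∃ v ∈ s, v.1 = c := by
  have hinj : Set.InjOn Prod.fst (s : Set (Fin n × Finset α)) :=
    fun u hu v hv h => by_contra fun hne => hs.2.2.1 u hu v hv hne h
  have himage : s.image Prod.fst = univ := by
    apply eq_univ_of_card
    rw [card_image_of_injOn hinj, hcard, Fintype.card_fin]
  exact mem_image.mp (show c ∈ s.image Prod.fst from himage ▸ mem_univ c)

lemma exists_mem_ids_snd_eq_univ {K : Set (Finset (ChromV n ℓ))}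
    {s : Finset (Fin n × Finset (ChromV n ℓ))} (hs : s ∈ subdiv (chromCol n ℓ) K)
    (hcol : ∀ c, ∃ v ∈ s, v.1 = c) : ∃ w ∈ s, ids w.2 = univ := by
  obtain ⟨w, hw, htop⟩ := exists_mem_forall_subset_of_chain Prod.snd hs.1 hs.2.2.2.1
  refine ⟨w, hw, eq_univ_of_forall fun c => ?_⟩
  obtain ⟨v, hv, rfl⟩ := hcol c
  exact ids_mono (htop v hv) (hs.2.1 v hv).2

lemma mem_vertexSet_subOf_one {τ : Finset (ChromV n ℓ)} {x : Fin n × Finset (ChromV n ℓ)} :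
    x ∈ vertexSet (subOf 1 τ) ↔ x.2.Nonempty ∧ x.2 ⊆ τ ∧ x.1 ∈ ids x.2 := by
  constructor
  · rintro ⟨s, hs, hxs⟩
    exact ⟨(hs.2.1 x hxs).1.1, (hs.2.1 x hxs).1.2, (hs.2.1 x hxs).2⟩
  · rintro ⟨hne, hsub, hcol⟩
    refine ⟨{x}, ⟨singleton_nonempty x, fun v hv => ?_, fun u hu v hv => ?_,
      fun u hu v hv => ?_, fun u hu v hv => ?_⟩, mem_singleton_self x⟩
    · rw [mem_singleton.mp hv]
      exact ⟨⟨hne, hsub⟩, hcol⟩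
    all_goals simp [mem_singleton.mp hu, mem_singleton.mp hv]

lemma ids_eq_univ_of_mem_subOf_one {τ : Finset (ChromV n ℓ)}
    {s : Finset (Fin n × Finset (ChromV n ℓ))} (hs : s ∈ subOf 1 τ) (hcard : s.card = n) :
    ids τ = univ :=
  eq_univ_of_forall fun c => by
    obtain ⟨v, hv, rfl⟩ := exists_mem_fst_eq_of_card_eq hs hcard c
    exact ids_mono (hs.2.1 v hv).1.2 (hs.2.1 v hv).2

end Subdivision

section OrderPreservingBijection

variable {n : ℕ} {s t : Finset (Fin n)}

lemma opBij_mem (hc : s.card = t.card) {i : Fin n} (hi : i ∈ s) : opBij s t i ∈ t := by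
  rw [opBij, dif_pos ⟨hi, hc⟩]
  exact coe_mem _

lemma opBij_strictMonoOn (hc : s.card = t.card) : StrictMonoOn (opBij s t) s := by
  intro i hi j hj hij
  rw [opBij, dif_pos ⟨hi, hc⟩, opBij, dif_pos ⟨hj, hc⟩, Subtype.coe_lt_coe, OrderIso.lt_iff_lt,
    Fin.cast_lt_cast, OrderIso.lt_iff_lt]
  exact hij

lemma ne_univ_of_ne_of_card_eq (hst : s ≠ t) (hc : s.card = t.card) : s ≠ univ := by
  rintro rfl
  exact hst (eq_univ_of_card t (hc.symm.trans card_univ)).symm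

end OrderPreservingBijection

section Coloring

variable {n ℓ : ℕ}

noncomputable def baseColoring (v : ChromV n (ℓ + 1)) : Fin 2 :=
  if n - 1 ≤ (ids v.2).card ∧ ∃ j ∈ ids v.2, j < v.1 then 0 else 1

noncomputable def wsbColoring (T A : Finset (ChromV n ℓ)) (i₀ : Fin n) (v : ChromV n (ℓ + 1)) :
    Fin 2 :=
  if v.2 = T then (if v.1 = i₀ then 1 else 0) else if v.2 = A then 0 else baseColoring v

def OnBoundary (β : Finset (ChromV n (ℓ + 1))) : Prop :=
  β.Nonempty ∧ ∀ w ∈ β, ids w.2 ≠ univ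

lemma baseColoring_vmap {s t : Finset (Fin n)} (hc : s.card = t.card) {v : ChromV n (ℓ + 1)}
    (hv : ids v.2 ⊆ s) (hv₁ : v.1 ∈ ids v.2) :
    baseColoring (vmap n (opBij s t) (ℓ + 1) v) = baseColoring v := by
  have hmono := (opBij_strictMonoOn hc).mono (coe_subset.mpr hv)
  change ite (n - 1 ≤ (ids (v.2.image (vmap n (opBij s t) ℓ))).card ∧
    ∃ j ∈ ids (v.2.image (vmap n (opBij s t) ℓ)), j < opBij s t v.1) _ _ = _
  simp only [ids_image_vmap, card_image_of_injOn hmono.injOn, exists_mem_image]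
  refine if_congr (and_congr_right fun _ => ?_) rfl rfl
  exact exists_congr fun j => and_congr_right fun hj => hmono.lt_iff_lt hj hv₁

lemma onBoundary_of_mem_chromSub {s : Finset (Fin n)} (hs : s ≠ univ)
    {β : Finset (ChromV n (ℓ + 1))} (hβ : β ∈ chromSub n s (ℓ + 1)) : OnBoundary β :=
  ⟨hβ.1, fun w hw hw' =>
    hs (univ_subset_iff.mp (hw' ▸ ids_subset_of_mem_chromSub (hβ.2.1 w hw).1))⟩

lemma onBoundary_image_vmap {s t : Finset (Fin n)} (hc : s.card = t.card) (ht : t ≠ univ)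
    {β : Finset (ChromV n (ℓ + 1))} (hβ : β ∈ chromSub n s (ℓ + 1)) :
    OnBoundary (β.image (vmap n (opBij s t) (ℓ + 1))) := by
  refine ⟨hβ.1.image _, fun w hw hw' => ht (univ_subset_iff.mp ?_)⟩
  obtain ⟨u, hu, rfl⟩ := mem_image.mp hw
  have hus : ids u.2 ⊆ s := ids_subset_of_mem_chromSub (hβ.2.1 u hu).1
  change ids (u.2.image (vmap n (opBij s t) ℓ)) = univ at hw'
  rw [← hw', ids_image_vmap]
  exact image_subset_iff.mpr fun i hi => opBij_mem hc (hus hi)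

lemma not_onBoundary_empty : ¬OnBoundary (∅ : Finset (ChromV n (ℓ + 1))) :=
  fun h => not_nonempty_empty h.1

lemma exists_not_onBoundary_erase (hn : 2 ≤ n) {ρ : Finset (Fin n)}
    {τ : Finset (ChromV n (ℓ + 1))} (hτ : τ ∈ chromSub n ρ (ℓ + 1)) (hfull : ids τ = univ) :
    ∃ u₀ ∈ τ, ¬OnBoundary τ ∧ ¬OnBoundary (τ.erase u₀) := by
  obtain ⟨w, hwτ, hw⟩ := exists_mem_ids_snd_eq_univ hτ fun c =>
    mem_image.mp (show c ∈ ids τ from hfull ▸ mem_univ c)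
  have hcard : 1 < τ.card := by rw [card_eq_of_ids_eq_univ hτ hfull]; omega
  obtain ⟨u₀, hu₀, hu₀w⟩ := exists_mem_ne hcard w
  exact ⟨u₀, hu₀, fun h => h.2 w hwτ hw, fun h => h.2 w (mem_erase.mpr ⟨hu₀w.symm, hwτ⟩) hw⟩

lemma wsbColoring_eq_baseColoring {T A : Finset (ChromV n (ℓ + 1))} {i₀ : Fin n}
    (hT : ¬OnBoundary T) (hA : ¬OnBoundary A) {v : ChromV n (ℓ + 1 + 1)} (hv : OnBoundary v.2) :
    wsbColoring T A i₀ v = baseColoring v := by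
  have hvT : v.2 ≠ T := fun h => hT (h ▸ hv)
  have hvA : v.2 ≠ A := fun h => hA (h ▸ hv)
  rw [wsbColoring, if_neg hvT, if_neg hvA]

lemma wsbColoring_symm {T A : Finset (ChromV n (ℓ + 1))} {i₀ : Fin n}
    (hT : ¬OnBoundary T) (hA : ¬OnBoundary A) :
    SymmColoring (wsbColoring T A i₀ : ChromV n (ℓ + 1 + 1) → Fin 2) := by
  intro s t _ _ hst hc v ⟨x, hx, hvx⟩
  obtain ⟨hv₂, hv₁⟩ := hx.2.1 v hvx
  rw [wsbColoring_eq_baseColoring hT hA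
      (onBoundary_image_vmap hc (ne_univ_of_ne_of_card_eq hst.symm hc.symm) hv₂),
    wsbColoring_eq_baseColoring hT hA
      (onBoundary_of_mem_chromSub (ne_univ_of_ne_of_card_eq hst hc) hv₂)]
  exact baseColoring_vmap hc (ids_subset_of_mem_chromSub hv₂) hv₁

end Coloring

section Valency

variable {n ℓ : ℕ} {T A : Finset (ChromV n ℓ)} {i₀ : Fin n}

lemma ne_of_card_le {β B : Finset (ChromV n ℓ)} (hB : B = ∅ ∨ n - 1 ≤ B.card)
    (hβ : β.Nonempty) (hcard : β.card ≤ n - 2) : β ≠ B := by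
  rintro rfl
  rcases hB with rfl | hB
  · exact not_nonempty_empty hβ
  · have := hβ.card_pos
    omega

lemma wsbColoring_eq_one_of_card_le (hT : T = ∅ ∨ n - 1 ≤ T.card)
    (hA : A = ∅ ∨ n - 1 ≤ A.card) {v : ChromV n (ℓ + 1)} (hv : v.2.Nonempty)
    (hcard : v.2.card ≤ n - 2) : wsbColoring T A i₀ v = 1 := by
  have hpos := hv.card_pos
  have hvT := ne_of_card_le hT hv hcard
  have hvA := ne_of_card_le hA hv hcard
  rw [wsbColoring, if_neg hvT, if_neg hvA, baseColoring, if_neg]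
  rintro ⟨h, -⟩
  have := h.trans (card_image_le.trans hcard)
  omega

lemma zero_mem_colorSet_wsbColoring {ρ : Finset (Fin n)} {τ : Finset (ChromV n ℓ)}
    (hτ : τ ∈ chromSub n ρ ℓ) (hn : 3 ≤ n) (hcard : n - 2 < τ.card) :
    (0 : Fin 2) ∈ colorSet (wsbColoring T A i₀) (subOf 1 τ) := by
  have hids : n - 1 ≤ (ids τ).card := by
    rw [card_ids_of_subset_of_mem_chromSub hτ subset_rfl]; omega
  have htwo : 1 < (ids τ).card := by omega
  have hvert : ∀ c ∈ ids τ, ((c, τ) : Fin n × Finset (ChromV n ℓ)) ∈ vertexSet (subOf 1 τ) :=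
    fun c hc => mem_vertexSet_subOf_one.mpr ⟨nonempty_of_mem_chromSub hτ, subset_rfl, hc⟩
  by_cases hτT : τ = T
  · obtain ⟨c, hc, hci₀⟩ := exists_mem_ne htwo i₀
    exact ⟨(c, τ), hvert c hc, by simp [wsbColoring, hτT, hci₀]⟩
  by_cases hτA : τ = A
  · obtain ⟨c, hc⟩ := card_pos.mp (zero_lt_one.trans htwo)
    subst hτA
    exact ⟨(c, τ), hvert c hc, by simp [wsbColoring, hτT]⟩
  have hne : (ids τ).Nonempty := card_pos.mp (zero_lt_one.trans htwo)
  refine ⟨((ids τ).max' hne, τ), hvert _ (max'_mem _ _), ?_⟩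
  simp only [wsbColoring, if_neg hτT, if_neg hτA, baseColoring]
  exact if_pos ⟨hids, (ids τ).min' hne, min'_mem _ _, min'_lt_max'_of_card _ htwo⟩

lemma colorSet_wsbColoring (hn : 3 ≤ n) (hT : T = ∅ ∨ n - 1 ≤ T.card)
    (hA : A = ∅ ∨ n - 1 ≤ A.card) {ρ : Finset (Fin n)} {τ : Finset (ChromV n ℓ)}
    (hτ : τ ∈ chromSub n ρ ℓ) : colorSet (wsbColoring T A i₀) (subOf 1 τ) = wsbVal τ := by
  have hone : (1 : Fin 2) ∈ colorSet (wsbColoring T A i₀) (subOf 1 τ) := by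
    obtain ⟨u, hu⟩ := nonempty_of_mem_chromSub hτ
    refine ⟨(chromCol n ℓ u, {u}), mem_vertexSet_subOf_one.mpr ?_, ?_⟩
    · exact ⟨singleton_nonempty u, singleton_subset_iff.mpr hu,
        mem_image_of_mem _ (mem_singleton_self u)⟩
    · exact wsbColoring_eq_one_of_card_le hT hA (singleton_nonempty u) (by simp; omega)
  rw [wsbVal]
  split_ifs with hsmall
  · refine subset_antisymm ?_ (Set.singleton_subset_iff.mpr hone)
    rintro _ ⟨x, hx, rfl⟩
    obtain ⟨hne, hsub, -⟩ := mem_vertexSet_subOf_one.mp hx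
    exact wsbColoring_eq_one_of_card_le hT hA hne ((card_le_card hsub).trans hsmall)
  · exact Set.eq_univ_of_forall (Fin.forall_fin_two.mpr
      ⟨zero_mem_colorSet_wsbColoring hτ hn (not_le.mp hsmall), hone⟩)

end Valency

section FacetsOfSubdividedFacet

variable {n ℓ : ℕ} {τ : Finset (ChromV n ℓ)} {s : Finset (Fin n × Finset (ChromV n ℓ))}

lemma exists_mem_snd_eq (hτ : τ.card = n) (hs : s ∈ subOf 1 τ) (hcard : s.card = n) :
    ∃ v ∈ s, v.2 = τ := by
  obtain ⟨w, hw, hwu⟩ := exists_mem_ids_snd_eq_univ hs (exists_mem_fst_eq_of_card_eq hs hcard)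
  refine ⟨w, hw, eq_of_subset_of_card_le (hs.2.1 w hw).1.2 ?_⟩
  calc τ.card = (ids w.2).card := by rw [hwu, card_univ, Fintype.card_fin, hτ]
    _ ≤ w.2.card := card_image_le

lemma exists_top_of_snd_ne (hs : s ∈ subOf 1 τ) {x : Fin n × Finset (ChromV n ℓ)} (hx : x ∈ s)
    (hxτ : x.2 ≠ τ) :
    ∃ a ∈ s, (∀ y ∈ s, y.2 ≠ τ → y.2 ⊆ a.2) ∧ ∀ y ∈ s, (y.2 = τ ↔ y.1 ∉ ids a.2) := by
  obtain ⟨a, ha, htop⟩ := exists_mem_forall_subset_of_chain (s := s.filter (·.2 ≠ τ)) Prod.snd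
    ⟨x, mem_filter.mpr ⟨hx, hxτ⟩⟩
    fun u hu v hv => hs.2.2.2.1 u (mem_filter.mp hu).1 v (mem_filter.mp hv).1
  obtain ⟨has, haτ⟩ := mem_filter.mp ha
  have htop' : ∀ y ∈ s, y.2 ≠ τ → y.2 ⊆ a.2 := fun y hy hyτ => htop y (mem_filter.mpr ⟨hy, hyτ⟩)
  refine ⟨a, has, htop', fun y hy => ⟨fun hyτ hya => haτ ?_, fun hya => ?_⟩⟩
  · exact subset_antisymm (hs.2.1 a has).1.2 (hyτ ▸ hs.2.2.2.2 y hy a has hya)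
  · exact by_contra fun hyτ => hya (ids_mono (htop' y hy hyτ) (hs.2.1 y hy).2)

lemma exists_wsbColoring_eq_zero (hn : 2 ≤ n) (hτ : τ.card = n) {u₀ : ChromV n ℓ}
    (hu₀ : u₀ ∈ τ) (hs : s ∈ subOf 1 τ) (hcard : s.card = n) :
    ∃ v ∈ s, wsbColoring τ (τ.erase u₀) (chromCol n ℓ u₀) v = 0 := by
  set i₀ := chromCol n ℓ u₀
  by_cases h : ∃ y ∈ s, y.2 = τ ∧ y.1 ≠ i₀
  · obtain ⟨y, hy, hyτ, hyi₀⟩ := h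
    exact ⟨y, hy, by simp [wsbColoring, hyτ, hyi₀]⟩
  push Not at h
  have hcol : ∀ c, ∃ v ∈ s, v.1 = c := exists_mem_fst_eq_of_card_eq hs hcard
  have : Nontrivial (Fin n) := Fin.nontrivial_iff_two_le.mpr hn
  obtain ⟨c, hci₀⟩ := exists_ne i₀
  obtain ⟨y, hy, rfl⟩ := hcol c
  obtain ⟨a, has, -, hiff⟩ := exists_top_of_snd_ne hs hy fun hyτ => hci₀ (h y hy hyτ)
  obtain ⟨vt, hvt, hvtτ⟩ := exists_mem_snd_eq hτ hs hcard
  have hi₀ : i₀ ∉ ids a.2 := h vt hvt hvtτ ▸ (hiff vt hvt).mp hvtτ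
  have hsup : univ.erase i₀ ⊆ ids a.2 := fun d hd => by
    obtain ⟨z, hz, rfl⟩ := hcol d
    exact not_not.mp (mt (hiff z hz).mpr fun hzτ => (mem_erase.mp hd).1 (h z hz hzτ))
  have haτ : a.2 ≠ τ := fun haτ => (hiff a has).mp haτ (hs.2.1 a has).2
  have haA : a.2 = τ.erase u₀ := by
    refine eq_of_subset_of_card_le (fun z hz => mem_erase.mpr ⟨?_, (hs.2.1 a has).1.2 hz⟩) ?_
    · rintro rfl
      exact hi₀ (mem_image_of_mem _ hz)
    · calc (τ.erase u₀).card = (univ.erase i₀).card := by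
            rw [card_erase_of_mem hu₀, card_erase_of_mem (mem_univ _), card_univ,
              Fintype.card_fin, hτ]
        _ ≤ (ids a.2).card := card_le_card hsup
        _ ≤ a.2.card := card_image_le
  exact ⟨a, has, by simp only [wsbColoring, if_neg haτ, if_pos haA]⟩

lemma exists_wsbColoring_eq_one (hτ : τ.card = n) {u₀ : ChromV n ℓ} (hs : s ∈ subOf 1 τ)
    (hcard : s.card = n) : ∃ v ∈ s, wsbColoring τ (τ.erase u₀) (chromCol n ℓ u₀) v = 1 := by
  set i₀ := chromCol n ℓ u₀
  have hcol : ∀ c, ∃ v ∈ s, v.1 = c := exists_mem_fst_eq_of_card_eq hs hcard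
  obtain ⟨x, hx, hxi₀⟩ := hcol i₀
  by_cases hxτ : x.2 = τ
  · exact ⟨x, hx, by simp only [wsbColoring, if_pos hxτ, if_pos hxi₀]⟩
  obtain ⟨a, -, htop, hiff⟩ := exists_top_of_snd_ne hs hx hxτ
  obtain ⟨vt, hvt, hvtτ⟩ := exists_mem_snd_eq hτ hs hcard
  have hvta : vt.1 ∉ ids a.2 := (hiff vt hvt).mp hvtτ
  have hi₀a : i₀ ∈ ids a.2 := hxi₀ ▸ not_not.mp (mt (hiff x hx).mpr hxτ)
  have hvtA : vt.1 ∈ ids (τ.erase u₀) := by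
    obtain ⟨z, hz, hzc⟩ := mem_image.mp
      (ids_eq_univ_of_mem_subOf_one hs hcard ▸ mem_univ vt.1 : vt.1 ∈ ids τ)
    refine mem_image.mpr ⟨z, mem_erase.mpr ⟨?_, hz⟩, hzc⟩
    rintro rfl
    exact hvta (hzc ▸ hi₀a)
  obtain ⟨y, hy, hym⟩ := hcol ((ids a.2).min' ⟨i₀, hi₀a⟩)
  have hyτ : y.2 ≠ τ := fun h => (hiff y hy).mp h (hym ▸ min'_mem _ _)
  have hya : y.2 ⊆ a.2 := htop y hy hyτ
  have hyA : y.2 ≠ τ.erase u₀ := fun h => hvta (ids_mono hya (h ▸ hvtA))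
  refine ⟨y, hy, ?_⟩
  simp only [wsbColoring, if_neg hyτ, if_neg hyA, baseColoring]
  refine if_neg ?_
  rintro ⟨-, j, hj, hjy⟩
  exact (min'_le _ j (ids_mono hya hj)).not_gt (hym ▸ hjy)

end FacetsOfSubdividedFacet

/-- For every n ≥ 3 and ℓ ≥ 1, the weak symmetry breaking valency task
on χ^ℓ(σ) is locally solvable in one round. -/
theorem wsb_valency_task_locally_solvable
    (n ℓ : ℕ) (hn : 3 ≤ n) (hℓ : 1 ≤ ℓ)
    (τ : Finset (ChromV n ℓ)) (hτ : τ ∈ chromSub n Finset.univ ℓ) :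
    ∃ b : ChromV n (ℓ + 1) → Fin 2,
      SymmColoring b ∧
      (∀ τ' ∈ chromSub n Finset.univ ℓ, colorSet b (subOf 1 τ') ⊆ wsbVal τ') ∧
      (∀ τ' ∈ chromSub n Finset.univ ℓ, colorSet b (subOf 1 τ') = wsbVal τ') ∧
      (∀ s ∈ subOf 1 τ, s.card = n → ∃ u ∈ s, ∃ v ∈ s, b u ≠ b v) := by
  obtain ⟨k, rfl⟩ := Nat.exists_eq_add_of_le' hℓ
  by_cases hfull : ids τ = univ
  · have hτcard := card_eq_of_ids_eq_univ hτ hfull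
    obtain ⟨u₀, hu₀, hτb, hAb⟩ := exists_not_onBoundary_erase (by omega) hτ hfull
    have hT : τ = ∅ ∨ n - 1 ≤ τ.card := Or.inr (by omega)
    have hA : τ.erase u₀ = ∅ ∨ n - 1 ≤ (τ.erase u₀).card :=
      Or.inr (by rw [card_erase_of_mem hu₀, hτcard])
    refine ⟨wsbColoring τ (τ.erase u₀) (chromCol n (k + 1) u₀), wsbColoring_symm hτb hAb,
      fun τ' h => (colorSet_wsbColoring hn hT hA h).subset,
      fun τ' h => colorSet_wsbColoring hn hT hA h, fun s hs hcard => ?_⟩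
    obtain ⟨u, hu, hu0⟩ := exists_wsbColoring_eq_zero (by omega) hτcard hu₀ hs hcard
    obtain ⟨v, hv, hv1⟩ := exists_wsbColoring_eq_one hτcard hs hcard
    exact ⟨u, hu, v, hv, by rw [hu0, hv1]; decide⟩
  · refine ⟨wsbColoring ∅ ∅ ⟨0, by omega⟩,
      wsbColoring_symm not_onBoundary_empty not_onBoundary_empty,
      fun τ' h => (colorSet_wsbColoring hn (Or.inl rfl) (Or.inl rfl) h).subset,
      fun τ' h => colorSet_wsbColoring hn (Or.inl rfl) (Or.inl rfl) h,
      fun s hs hcard => absurd (ids_eq_univ_of_mem_subOf_one hs hcard) hfull⟩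
end
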